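/- With the geometric embedding π of T_n, fix x₀ ∈ T_n and let B be the set of V's (x,y,z) with π(y) ≤ π(x₀) ≤ π(z). Then the set C₁ = {(x,y,z) ∈ B : π(x) < π(x₀)} is an independent set in G_n. -/
import Mathlib


/-- `y` lies in the left tree above `x`: the first bit of `y` after the
initial segment `x` is `0`. -/
def leftAbove (x y : List Bool) : Prop := ∃ t, y = x ++ false :: t

/-- `y` lies in the right tree above `x`: the first bit of `y` after the
initial segment `x` is `1`. -/
def rightAbove (x y : List Bool) : Prop := ∃ t, y = x ++ true :: t

/-- A "V" in the complete binary tree `T n` (binary strings of length at most `n`):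
a low point `x` with `y` in the left tree above `x` and `z` in the right tree above `x`. -/
structure Vee (n : ℕ) where
  x : List Bool
  y : List Bool
  z : List Bool
  hx : x.length ≤ n
  hy : y.length ≤ n
  hz : z.length ≤ n
  hxy : leftAbove x y
  hxz : rightAbove x z

/-- The graph `G n` of V's: two V's are adjacent iff an endpoint (`y` or `z`)
of one is the low point `x` of the other. -/
def GraphV (n : ℕ) : SimpleGraph (Vee n) :=
  SimpleGraph.fromRel (fun V₁ V₂ => V₁.z = V₂.x ∨ V₁.y = V₂.x)

/-- The horizontal coordinate of the geometric embedding of the binary tree: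
`π(x) = Σᵢ εᵢ 2^{-(i-1)}` with `εᵢ = 1` if bit `i` is `1` and `εᵢ = -1` otherwise. -/
noncomputable def piCoord : List Bool → ℝ
  | [] => 0
  | b :: t => (if b then 1 else -1) + piCoord t / 2


lemma piCoord_cons (b : Bool) (t : List Bool) :
    piCoord (b :: t) = (if b then 1 else -1) + piCoord t / 2 := rfl

lemma piCoord_bound (s : List Bool) : |piCoord s| ≤ 2 - 2 * (1/2 : ℝ) ^ s.length := by
  induction s with
  | nil => simp [piCoord]
  | cons b t ih =>
    rw [piCoord_cons]
    have h1 : |(if b then (1:ℝ) else -1) + piCoord t / 2| ≤ 1 + |piCoord t| / 2 := by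
      refine (abs_add_le _ _).trans ?_
      have : |(if b then (1:ℝ) else -1)| = 1 := by cases b <;> simp
      rw [this, abs_div, abs_two]
    have h2 : (0:ℝ) < (1/2:ℝ) ^ t.length := by positivity
    calc |(if b then (1:ℝ) else -1) + piCoord t / 2| ≤ 1 + |piCoord t| / 2 := h1
      _ ≤ 2 - 2 * (1/2:ℝ) ^ (b :: t).length := by
          simp only [List.length_cons, pow_succ]
          nlinarith [ih]

lemma piCoord_append (x s : List Bool) :
    piCoord (x ++ s) = piCoord x + piCoord s * (1/2:ℝ) ^ x.length := by
  induction x with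
  | nil => simp [piCoord]
  | cons b t ih =>
    simp only [List.cons_append, piCoord_cons, ih, List.length_cons, pow_succ]
    ring

lemma piCoord_abs_lt (s : List Bool) : |piCoord s| < 2 := by
  have h := piCoord_bound s
  have : (0:ℝ) < (1/2:ℝ) ^ s.length := by positivity
  linarith [h]

lemma key_lt (x s t : List Bool) :
    piCoord ((x ++ false :: s) ++ true :: t) < piCoord x := by
  have hs := (abs_le.mp (piCoord_bound s)).2
  have ht := (abs_le.mp (piCoord_abs_lt t).le).2
  have ht' : piCoord t < 2 := (abs_lt.mp (piCoord_abs_lt t)).2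
  rw [piCoord_append, piCoord_append, piCoord_cons, piCoord_cons]
  simp only [if_true, if_false, List.length_append, List.length_cons]
  have hA : (0:ℝ) < (1/2:ℝ) ^ x.length := by positivity
  have hB : (0:ℝ) < (1/2:ℝ) ^ s.length := by positivity
  have hpow : (1/2:ℝ) ^ (x.length + (s.length + 1))
      = (1/2:ℝ) ^ x.length * (1/2:ℝ) ^ s.length * (1/2) := by
    rw [pow_add, pow_succ]; ring
  rw [hpow]
  norm_num
  nlinarith [mul_pos hA hB, mul_le_mul_of_nonneg_left hs hA.le,
    mul_lt_mul_of_pos_left ht' (mul_pos hA hB)]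

lemma right_gt {x z : List Bool} (h : rightAbove x z) : piCoord x < piCoord z := by
  obtain ⟨t, rfl⟩ := h
  rw [piCoord_append, piCoord_cons]
  have ht : -2 < piCoord t := (abs_lt.mp (piCoord_abs_lt t)).1
  have hA : (0:ℝ) < (1/2:ℝ) ^ x.length := by positivity
  simp only [if_true]
  nlinarith

/-- For a fixed `x₀` in `T n`, the set `C₁` of V's `(x,y,z)` of the bag at `x₀`
(those with `π y ≤ π x₀ ≤ π z`) satisfying `π x < π x₀` is independent in `G n`. -/
theorem stmt14 (n : ℕ) (x₀ : List Bool) (hx₀ : x₀.length ≤ n) :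
    ∀ V₁ ∈ {W : Vee n | piCoord W.y ≤ piCoord x₀ ∧ piCoord x₀ ≤ piCoord W.z ∧
        piCoord W.x < piCoord x₀},
      ∀ V₂ ∈ {W : Vee n | piCoord W.y ≤ piCoord x₀ ∧ piCoord x₀ ≤ piCoord W.z ∧
        piCoord W.x < piCoord x₀},
        ¬ (GraphV n).Adj V₁ V₂ := by
  rintro V₁ ⟨hy₁, hz₁, hx₁⟩ V₂ ⟨hy₂, hz₂, hx₂⟩ hadj
  rw [GraphV, SimpleGraph.fromRel_adj] at hadj
  obtain ⟨hne, h | h⟩ := hadj <;> rcases h with h | h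
  · -- z₁ = x₂
    rw [h] at hz₁; linarith
  · -- y₁ = x₂ : then π(z₂) < π(x₁)
    obtain ⟨s, hs⟩ := V₁.hxy
    obtain ⟨t, htz⟩ := V₂.hxz
    have : piCoord V₂.z < piCoord V₁.x := by
      rw [htz, ← h, hs]; exact key_lt _ _ _
    linarith
  · -- z₂ = x₁
    rw [h] at hz₂; linarith
  · -- y₂ = x₁
    obtain ⟨s, hs⟩ := V₂.hxy
    obtain ⟨t, htz⟩ := V₁.hxz
    have : piCoord V₁.z < piCoord V₂.x := by
      rw [htz, ← h, hs]; exact key_lt _ _ _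
    linarith
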